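/- Let μ be a σ-finite measure on a measurable space (X,A), and let θ, θ' be nonnegative μ-integrable functions (densities of finite measures ν_θ = θ·μ, ν_{θ'} = θ'·μ). Let ψ(u) = (u−1)/(u+1) (with ψ(∞)=1). Then for every finite measure ν on (X,A): ∫_X ψ(√(θ'/θ)) dν + (1/4)[∫_X θ dμ − ∫_X θ' dμ] ≤ 3 H²(ν, ν_θ) − (1/3) H²(ν, ν_{θ'}), where H²(ν,ν') = (1/2)∫ (√(dν/dλ) − √(dν'/dλ))² dλ for any common dominating measure λ. -/
import Mathlib


open MeasureTheory

/-- Squared Hellinger distance between finite measures, computed with the dominating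
measure `ν + ν'`. -/
noncomputable def Hsq {X : Type*} [MeasurableSpace X] (ν ν' : Measure X) : ℝ :=
  (1 / 2) * ∫ x,
    (Real.sqrt ((ν.rnDeriv (ν + ν') x).toReal) -
      Real.sqrt ((ν'.rnDeriv (ν + ν') x).toReal)) ^ 2 ∂(ν + ν')

/-- `ψ(√(θ'/θ))` with the conventions `ψ(∞) = 1` and `0/0 = 1` (so `ψ(√(0/0)) = ψ(1) = 0`). -/
noncomputable def psiSqrtRatio {X : Type*} (θ θ' : X → ℝ) (x : X) : ℝ :=
  if θ x = 0 then (if θ' x = 0 then 0 else 1)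
  else (Real.sqrt (θ' x / θ x) - 1) / (Real.sqrt (θ' x / θ x) + 1)

/-- The core polynomial inequality. -/
theorem polyKey (u v w : ℝ) (hu : 0 ≤ u) (hv : 0 ≤ v) (hw : 0 ≤ w) :
    0 ≤ (u+v)*((3/2)*(w-u)^2 - (1/6)*(w-v)^2 - (1/4)*(u^2-v^2)) - w^2*(v-u) := by
  rcases eq_or_lt_of_le (by positivity : (0:ℝ) ≤ u+v+w) with h|h
  · have hu0 : u = 0 := by linarith
    have hv0 : v = 0 := by linarith
    have hw0 : w = 0 := by linarith
    simp [hu0, hv0, hw0]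
  · have key : 0 ≤ (u+v+w) *
        ((u+v)*((3/2)*(w-u)^2 - (1/6)*(w-v)^2 - (1/4)*(u^2-v^2)) - w^2*(v-u)) := by
      nlinarith [mul_nonneg (mul_nonneg hu hw) (sq_nonneg (w-v)),
        mul_nonneg (mul_nonneg hv hv) (sq_nonneg (w-u)),
        mul_nonneg (mul_nonneg hv hw) (sq_nonneg (u-v)),
        mul_nonneg (mul_nonneg hv hw) (sq_nonneg (w-u)),
        mul_nonneg (mul_nonneg hv hv) (sq_nonneg (w-v)),
        mul_nonneg (mul_nonneg hu hv) (sq_nonneg (w-u)),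
        mul_nonneg (mul_nonneg hv hw) (sq_nonneg (w-v)),
        mul_nonneg (mul_nonneg hu hv) (sq_nonneg (w-v)),
        mul_nonneg (mul_nonneg hu hw) (sq_nonneg (w-u)),
        sq_nonneg (u*(u+v-2*w)),
        mul_nonneg (mul_nonneg hu hu) (sq_nonneg (w-u))]
    exact nonneg_of_mul_nonneg_right key h

theorem abs_psi_le {X : Type*} (θ θ' : X → ℝ) (x : X) : |psiSqrtRatio θ θ' x| ≤ 1 := by
  unfold psiSqrtRatio
  split_ifs with h1 h2
  · simp
  · simp
  · have hs : 0 ≤ Real.sqrt (θ' x / θ x) := Real.sqrt_nonneg _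
    rw [abs_le]
    constructor
    · rw [le_div_iff₀ (by linarith)]; linarith
    · rw [div_le_one (by linarith)]; linarith

theorem psi_measurable {X : Type*} [MeasurableSpace X] {θ θ' : X → ℝ}
    (hθm : Measurable θ) (hθ'm : Measurable θ') : Measurable (psiSqrtRatio θ θ') := by
  have hs : Measurable fun x => Real.sqrt (θ' x / θ x) :=
    Real.continuous_sqrt.measurable.comp (hθ'm.div hθm)
  have h0 : MeasurableSet {x | θ x = 0} := hθm (measurableSet_singleton 0)
  have h0' : MeasurableSet {x | θ' x = 0} := hθ'm (measurableSet_singleton 0)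
  exact Measurable.ite h0 (Measurable.ite h0' measurable_const measurable_const)
    ((hs.sub measurable_const).div (hs.add measurable_const))

/-- Pointwise key inequality. -/
theorem pointwiseKey {X : Type*} (θ θ' : X → ℝ) (x : X) (ht : 0 ≤ θ x) (ht' : 0 ≤ θ' x)
    (c z : ℝ) (hc : 0 ≤ c) (hz : 0 ≤ z) :
    psiSqrtRatio θ θ' x * z + (1/4) * (θ x * c - θ' x * c) ≤
      (3/2) * (Real.sqrt z - Real.sqrt (θ x * c))^2
        - (1/6) * (Real.sqrt z - Real.sqrt (θ' x * c))^2 := by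
  have hw2 : Real.sqrt z ^ 2 = z := Real.sq_sqrt hz
  have hw : 0 ≤ Real.sqrt z := Real.sqrt_nonneg z
  have hψ := abs_psi_le θ θ' x
  rw [abs_le] at hψ
  rcases eq_or_lt_of_le hc with hc0 | hc0
  · -- c = 0
    rw [← hc0]
    simp only [mul_zero, Real.sqrt_zero, sub_zero]
    nlinarith [hψ.2, hz]
  by_cases ht0 : θ x = 0
  · -- θ x = 0
    by_cases ht'0 : θ' x = 0
    · simp only [psiSqrtRatio, ht0, ht'0, if_true, zero_mul, Real.sqrt_zero, sub_zero,
        if_pos rfl]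
      nlinarith
    · have hv2 : Real.sqrt (θ' x * c) ^ 2 = θ' x * c :=
        Real.sq_sqrt (mul_nonneg ht' hc)
      have hv : 0 ≤ Real.sqrt (θ' x * c) := Real.sqrt_nonneg _
      simp only [psiSqrtRatio, ht0, ht'0, if_pos rfl, if_false, if_true, zero_mul,
        Real.sqrt_zero, sub_zero, one_mul]
      nlinarith [mul_nonneg hw hv]
  · -- θ x > 0
    have htpos : 0 < θ x := lt_of_le_of_ne ht (Ne.symm ht0)
    have hu2 : Real.sqrt (θ x * c) ^ 2 = θ x * c := Real.sq_sqrt (mul_nonneg ht hc)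
    have hv2 : Real.sqrt (θ' x * c) ^ 2 = θ' x * c := Real.sq_sqrt (mul_nonneg ht' hc)
    set u := Real.sqrt (θ x * c) with hu_def
    set v := Real.sqrt (θ' x * c) with hv_def
    set w := Real.sqrt z with hw_def
    have hu0 : 0 < u := Real.sqrt_pos.mpr (mul_pos htpos hc0)
    have hv0 : 0 ≤ v := Real.sqrt_nonneg _
    have hratio : Real.sqrt (θ' x / θ x) = v / u := by
      rw [hu_def, hv_def, ← Real.sqrt_div (mul_nonneg ht' hc),
        mul_div_mul_right _ _ (ne_of_gt hc0)]
    have hvu : 0 < v + u := by linarith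
    have hψeq : psiSqrtRatio θ θ' x = (v - u) / (v + u) := by
      rw [psiSqrtRatio, if_neg ht0, hratio]
      have e1 : v / u - 1 = (v - u) / u := by field_simp
      have e2 : v / u + 1 = (v + u) / u := by field_simp
      rw [e1, e2, div_div_div_cancel_right₀ hu0.ne']
    rw [hψeq]
    have hdiv : (v - u) / (v + u) * z ≤
        ((3/2) * (w-u)^2 - (1/6) * (w-v)^2) - (1/4) * (θ x * c - θ' x * c) := by
      rw [div_mul_eq_mul_div, div_le_iff₀ hvu]
      nlinarith [polyKey u v w hu0.le hv0 hw]
    linarith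

/-- Change of dominating measure for the Hellinger distance. -/
theorem Hsq_eq {X : Type*} [MeasurableSpace X] (ν ν' lam : Measure X)
    [IsFiniteMeasure ν] [IsFiniteMeasure ν'] [SigmaFinite lam]
    (h : ν ≪ lam) (h' : ν' ≪ lam) :
    Hsq ν ν' = (1 / 2) * ∫ x,
      (Real.sqrt ((ν.rnDeriv lam x).toReal) -
        Real.sqrt ((ν'.rnDeriv lam x).toReal)) ^ 2 ∂lam := by
  have hκ : ν + ν' ≪ lam := Measure.AbsolutelyContinuous.add_left h h'
  have hν : ν ≪ ν + ν' := Measure.AbsolutelyContinuous.add_right .rfl ν'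
  have hν' : ν' ≪ ν + ν' := by
    rw [add_comm]; exact Measure.AbsolutelyContinuous.add_right .rfl ν
  rw [Hsq, ← integral_rnDeriv_smul hκ
    (f := fun x => (Real.sqrt ((ν.rnDeriv (ν + ν') x).toReal) -
      Real.sqrt ((ν'.rnDeriv (ν + ν') x).toReal)) ^ 2)]
  congr 1
  apply integral_congr_ae
  filter_upwards [Measure.rnDeriv_mul_rnDeriv (κ := lam) hν,
    Measure.rnDeriv_mul_rnDeriv (κ := lam) hν'] with x h1 h2
  have h1' : (ν.rnDeriv lam x).toReal =
      (ν.rnDeriv (ν + ν') x).toReal * ((ν + ν').rnDeriv lam x).toReal := by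
    rw [← h1]; simp [ENNReal.toReal_mul]
  have h2' : (ν'.rnDeriv lam x).toReal =
      (ν'.rnDeriv (ν + ν') x).toReal * ((ν + ν').rnDeriv lam x).toReal := by
    rw [← h2]; simp [ENNReal.toReal_mul]
  rw [smul_eq_mul, h1', h2', Real.sqrt_mul ENNReal.toReal_nonneg,
    Real.sqrt_mul ENNReal.toReal_nonneg]
  have hc : Real.sqrt (((ν + ν').rnDeriv lam x).toReal) ^ 2 =
      ((ν + ν').rnDeriv lam x).toReal := Real.sq_sqrt ENNReal.toReal_nonneg
  nlinarith [hc]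

/-- For densities `θ, θ'` w.r.t. a σ-finite `μ` and any finite measure `ν`:
`∫ ψ(√(θ'/θ)) dν + (1/4)(∫θ dμ − ∫θ' dμ) ≤ 3H²(ν,ν_θ) − (1/3)H²(ν,ν_{θ'})`. -/
theorem stmt12 {X : Type*} [MeasurableSpace X] (μ : Measure X) [SigmaFinite μ]
    (θ θ' : X → ℝ) (hθm : Measurable θ) (hθ'm : Measurable θ')
    (hθ : ∀ x, 0 ≤ θ x) (hθ' : ∀ x, 0 ≤ θ' x)
    (hθint : Integrable θ μ) (hθ'int : Integrable θ' μ)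
    (ν : Measure X) [IsFiniteMeasure ν] :
    (∫ x, psiSqrtRatio θ θ' x ∂ν) + (1 / 4) * ((∫ x, θ x ∂μ) - ∫ x, θ' x ∂μ) ≤
      3 * Hsq ν (μ.withDensity fun x => ENNReal.ofReal (θ x)) -
        (1 / 3) * Hsq ν (μ.withDensity fun x => ENNReal.ofReal (θ' x)) := by
  set νθ : Measure X := μ.withDensity fun x => ENNReal.ofReal (θ x) with hνθ_def
  set νθ' : Measure X := μ.withDensity fun x => ENNReal.ofReal (θ' x) with hνθ'_def
  have instθ : IsFiniteMeasure νθ := isFiniteMeasure_withDensity_ofReal hθint.2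
  have instθ' : IsFiniteMeasure νθ' := isFiniteMeasure_withDensity_ofReal hθ'int.2
  set lam : Measure X := ν + μ with hlam_def
  have hνlam : ν ≪ lam := Measure.AbsolutelyContinuous.add_right .rfl μ
  have hμlam : μ ≪ lam := by
    rw [hlam_def, add_comm]; exact Measure.AbsolutelyContinuous.add_right .rfl ν
  have hθμ : νθ ≪ μ := withDensity_absolutelyContinuous μ _
  have hθ'μ : νθ' ≪ μ := withDensity_absolutelyContinuous μ _
  set p : X → ℝ := fun x => (ν.rnDeriv lam x).toReal with hp_def
  set m : X → ℝ := fun x => (μ.rnDeriv lam x).toReal with hm_def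
  have hp_meas : Measurable p := (Measure.measurable_rnDeriv _ _).ennreal_toReal
  have hm_meas : Measurable m := (Measure.measurable_rnDeriv _ _).ennreal_toReal
  have hp_nonneg : ∀ x, 0 ≤ p x := fun x => ENNReal.toReal_nonneg
  have hm_nonneg : ∀ x, 0 ≤ m x := fun x => ENNReal.toReal_nonneg
  -- density identities
  have hdens : ∀ (g : X → ℝ), Measurable g → (∀ x, 0 ≤ g x) →
      (fun x => ((μ.withDensity fun y => ENNReal.ofReal (g y)).rnDeriv lam x).toReal)
        =ᵐ[lam] fun x => g x * m x := by
    intro g hgm hg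
    set νg := μ.withDensity fun y => ENNReal.ofReal (g y) with hνg_def
    have hgμ : νg ≪ μ := withDensity_absolutelyContinuous μ _
    have h1 : νg.rnDeriv μ * μ.rnDeriv lam =ᵐ[lam] νg.rnDeriv lam :=
      Measure.rnDeriv_mul_rnDeriv hgμ
    have h2 : ∀ᵐ x ∂μ, νg.rnDeriv μ x = ENNReal.ofReal (g x) :=
      Measure.rnDeriv_withDensity μ (hgm.ennreal_ofReal)
    have h2' : ∀ᵐ x ∂lam, μ.rnDeriv lam x ≠ 0 → νg.rnDeriv μ x = ENNReal.ofReal (g x) := by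
      rw [← ae_withDensity_iff (Measure.measurable_rnDeriv μ lam),
        Measure.withDensity_rnDeriv_eq μ lam hμlam]
      exact h2
    filter_upwards [h1, h2', Measure.rnDeriv_lt_top μ lam] with x hx1 hx2 hx3
    rcases eq_or_ne (μ.rnDeriv lam x) 0 with h0 | h0
    · simp only [← hx1, Pi.mul_apply, h0, mul_zero, ENNReal.toReal_zero]
      simp [hm_def, h0]
    · rw [← hx1, Pi.mul_apply, hx2 h0, ENNReal.toReal_mul, ENNReal.toReal_ofReal (hg x)]
  have hdθ := hdens θ hθm hθ
  have hdθ' := hdens θ' hθ'm hθ'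
  -- rewrite Hellinger distances over lam
  haveI : SigmaFinite lam := by infer_instance
  rw [Hsq_eq ν νθ lam hνlam (hθμ.trans hμlam), Hsq_eq ν νθ' lam hνlam (hθ'μ.trans hμlam)]
  -- rewrite the three integrals over lam
  have hint1 : (∫ x, psiSqrtRatio θ θ' x ∂ν) = ∫ x, psiSqrtRatio θ θ' x * p x ∂lam := by
    rw [← integral_rnDeriv_smul hνlam (f := psiSqrtRatio θ θ')]
    apply integral_congr_ae
    filter_upwards with x
    rw [smul_eq_mul, mul_comm]
  have hint2 : (∫ x, θ x ∂μ) = ∫ x, θ x * m x ∂lam := by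
    rw [← integral_rnDeriv_smul hμlam (f := θ)]
    apply integral_congr_ae
    filter_upwards with x
    rw [smul_eq_mul, mul_comm]
  have hint3 : (∫ x, θ' x ∂μ) = ∫ x, θ' x * m x ∂lam := by
    rw [← integral_rnDeriv_smul hμlam (f := θ')]
    apply integral_congr_ae
    filter_upwards with x
    rw [smul_eq_mul, mul_comm]
  rw [hint1, hint2, hint3]
  -- replace rnDeriv integrands by densities
  have hH1 : (∫ x, (Real.sqrt ((ν.rnDeriv lam x).toReal) -
      Real.sqrt ((νθ.rnDeriv lam x).toReal)) ^ 2 ∂lam) =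
      ∫ x, (Real.sqrt (p x) - Real.sqrt (θ x * m x)) ^ 2 ∂lam := by
    apply integral_congr_ae
    filter_upwards [hdθ] with x hx
    rw [hx]
  have hH2 : (∫ x, (Real.sqrt ((ν.rnDeriv lam x).toReal) -
      Real.sqrt ((νθ'.rnDeriv lam x).toReal)) ^ 2 ∂lam) =
      ∫ x, (Real.sqrt (p x) - Real.sqrt (θ' x * m x)) ^ 2 ∂lam := by
    apply integral_congr_ae
    filter_upwards [hdθ'] with x hx
    rw [hx]
  rw [hH1, hH2]
  -- integrability
  have hp_int : Integrable p lam := Measure.integrable_toReal_rnDeriv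
  have ha_int : Integrable (fun x => θ x * m x) lam :=
    (Measure.integrable_toReal_rnDeriv (μ := νθ) (ν := lam)).congr hdθ
  have hb_int : Integrable (fun x => θ' x * m x) lam :=
    (Measure.integrable_toReal_rnDeriv (μ := νθ') (ν := lam)).congr hdθ'
  have hψp_int : Integrable (fun x => psiSqrtRatio θ θ' x * p x) lam := by
    refine Integrable.mono' hp_int
      (((psi_measurable hθm hθ'm).mul hp_meas).aestronglyMeasurable) ?_
    filter_upwards with x
    rw [Real.norm_eq_abs, abs_mul]
    calc |psiSqrtRatio θ θ' x| * |p x| ≤ 1 * |p x| :=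
          mul_le_mul_of_nonneg_right (abs_psi_le θ θ' x) (abs_nonneg _)
      _ = p x := by rw [one_mul, abs_of_nonneg (hp_nonneg x)]
  have hsq_int : ∀ (a : X → ℝ), Measurable a → (∀ x, 0 ≤ a x) → Integrable a lam →
      Integrable (fun x => (Real.sqrt (p x) - Real.sqrt (a x)) ^ 2) lam := by
    intro a ham ha hint
    refine Integrable.mono' ((hp_int.const_mul 2).add (hint.const_mul 2))
      ((((Real.continuous_sqrt.measurable.comp hp_meas).sub
        (Real.continuous_sqrt.measurable.comp ham)).pow_const 2).aestronglyMeasurable) ?_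
    filter_upwards with x
    have h1 : Real.sqrt (p x) ^ 2 = p x := Real.sq_sqrt (hp_nonneg x)
    have h2 : Real.sqrt (a x) ^ 2 = a x := Real.sq_sqrt (ha x)
    rw [Real.norm_eq_abs, abs_of_nonneg (sq_nonneg _)]
    simp only [Pi.add_apply]
    nlinarith [sq_nonneg (Real.sqrt (p x) + Real.sqrt (a x))]
  have hg1_int : Integrable (fun x => (Real.sqrt (p x) - Real.sqrt (θ x * m x)) ^ 2) lam :=
    hsq_int (fun x => θ x * m x) (hθm.mul hm_meas)
      (fun x => mul_nonneg (hθ x) (hm_nonneg x)) ha_int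
  have hg2_int : Integrable (fun x => (Real.sqrt (p x) - Real.sqrt (θ' x * m x)) ^ 2) lam :=
    hsq_int (fun x => θ' x * m x) (hθ'm.mul hm_meas)
      (fun x => mul_nonneg (hθ' x) (hm_nonneg x)) hb_int
  have h4 : Integrable (fun x => (1/4 : ℝ) * (θ x * m x - θ' x * m x)) lam := by
    simpa using (ha_int.sub hb_int).const_mul (1/4)
  have h5 : Integrable (fun x => (3/2 : ℝ) * (Real.sqrt (p x) - Real.sqrt (θ x * m x)) ^ 2) lam :=
    hg1_int.const_mul _
  have h6 : Integrable (fun x => (1/6 : ℝ) * (Real.sqrt (p x) - Real.sqrt (θ' x * m x)) ^ 2) lam :=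
    hg2_int.const_mul _
  -- the integral inequality
  have hmono : (∫ x, (psiSqrtRatio θ θ' x * p x
        + (1/4) * (θ x * m x - θ' x * m x)) ∂lam) ≤
      ∫ x, ((3/2) * (Real.sqrt (p x) - Real.sqrt (θ x * m x)) ^ 2
        - (1/6) * (Real.sqrt (p x) - Real.sqrt (θ' x * m x)) ^ 2) ∂lam := by
    refine integral_mono (by exact hψp_int.add h4) (by exact h5.sub h6) ?_
    intro x
    exact pointwiseKey θ θ' x (hθ x) (hθ' x) (m x) (p x) (hm_nonneg x) (hp_nonneg x)
  have eL : (∫ x, (psiSqrtRatio θ θ' x * p x + (1/4) * (θ x * m x - θ' x * m x)) ∂lam)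
      = (∫ x, psiSqrtRatio θ θ' x * p x ∂lam)
        + (1/4) * ((∫ x, θ x * m x ∂lam) - ∫ x, θ' x * m x ∂lam) := by
    rw [integral_add hψp_int h4, integral_const_mul, integral_sub ha_int hb_int]
  have eR : (∫ x, ((3/2) * (Real.sqrt (p x) - Real.sqrt (θ x * m x)) ^ 2
        - (1/6) * (Real.sqrt (p x) - Real.sqrt (θ' x * m x)) ^ 2) ∂lam)
      = (3/2) * (∫ x, (Real.sqrt (p x) - Real.sqrt (θ x * m x)) ^ 2 ∂lam)
        - (1/6) * ∫ x, (Real.sqrt (p x) - Real.sqrt (θ' x * m x)) ^ 2 ∂lam := by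
    rw [integral_sub h5 h6, integral_const_mul, integral_const_mul]
  rw [eL, eR] at hmono
  linarith
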